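/- arXiv:2312.02044 — 3 statements merged into one kernel-verified Lean document; each statement's English description precedes it below -/
import Mathlib

section
/- Let q ≥ 2, let ν ≥ 4/c₁ for a constant 0 < c₁ < 1, and let δ₁ > 0 satisfy δ₁ ≤ c₁/(2 log q). Set β₁ = 1 − δ₁ and suppose x ≥ q^ν. Then 1 − x^(β₁−1)/β₁ ≥ (4 δ₁/(3 c₁)) · log q − δ₁. -/
/-! Put `t = δ₁ log q / c₁`, so that `t ≤ 1/2`, `x^(-δ₁) ≤ q^(-4δ₁/c₁) = e^(-4t)` and, as
`log 2 > 2/3` and `c₁ < 1`, `δ₁ ≤ 3t/2`. The claim is `x^(-δ₁) ≤ (1 - δ₁)(1 + δ₁ - 4t/3)`; the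
right side is concave in `δ₁`, hence at least its value `1 - 4t/3 - t²/4` at `δ₁ = 3t/2`, and
`e^(-4t)` lies below this on `[0, 1/2]` because `e^(4t) ≥ 1 + 4t + 8t²`. -/

open Real

theorem Real.exp_neg_four_mul_le_of_le_half {t : ℝ} (ht₀ : 0 ≤ t) (ht : t ≤ 1 / 2) :
    exp (-(4 * t)) ≤ 1 - 4 * t / 3 - t ^ 2 / 4 := by
  have hexp : 1 + 4 * t + 8 * t ^ 2 ≤ exp (4 * t) := by
    nlinarith [quadratic_le_exp_of_nonneg (by linarith : 0 ≤ 4 * t)]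
  have hpoly : 1 ≤ (1 - 4 * t / 3 - t ^ 2 / 4) * (1 + 4 * t + 8 * t ^ 2) := by
    have h : 0 ≤ 1 / 2 - t := by linarith
    nlinarith [mul_nonneg ht₀ h, mul_nonneg (mul_nonneg ht₀ ht₀) h,
      mul_nonneg (mul_nonneg (mul_nonneg ht₀ ht₀) ht₀) h]
  rw [exp_neg, inv_le_iff_one_le_mul₀ (exp_pos _)]
  exact hpoly.trans (by gcongr; nlinarith)

theorem one_sub_sub_sq_le_one_sub_mul_one_add_sub {t δ : ℝ} (hδ₀ : 0 ≤ δ)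
    (hδ : δ ≤ 3 * t / 2) :
    1 - 4 * t / 3 - t ^ 2 / 4 ≤ (1 - δ) * (1 + δ - 4 * t / 3) := by
  nlinarith [mul_nonneg (sub_nonneg.2 hδ) (by linarith : 0 ≤ δ + t / 6)]

/-- Exceptional-zero estimate: if `q ≥ 2`, `ν ≥ 4/c₁` with `0 < c₁ < 1`,
`0 < δ₁ ≤ c₁/(2 log q)`, `β₁ = 1 − δ₁` and `x ≥ q^ν`, then
`1 − x^(β₁−1)/β₁ ≥ (4δ₁/(3c₁))·log q − δ₁`. -/
theorem exceptional_zero_estimate (q : ℝ) (hq : 2 ≤ q) (c₁ ν δ₁ x : ℝ)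
    (hc₁0 : 0 < c₁) (hc₁1 : c₁ < 1) (hν : 4 / c₁ ≤ ν)
    (hδ₁0 : 0 < δ₁) (hδ₁ : δ₁ ≤ c₁ / (2 * Real.log q))
    (hx : q ^ ν ≤ x) :
    1 - x ^ ((1 - δ₁) - 1) / (1 - δ₁) ≥ (4 * δ₁ / (3 * c₁)) * Real.log q - δ₁ := by
  have hq₀ : 0 < q := by linarith
  have hL : log 2 ≤ log q := log_le_log two_pos hq
  have hL₀ : 0 < log q := (log_pos one_lt_two).trans_le hL
  set t := δ₁ * log q / c₁ with ht_def
  have ht₀ : 0 ≤ t := by positivity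
  have ht : t ≤ 1 / 2 := by
    rw [le_div_iff₀ (by positivity)] at hδ₁
    rw [div_le_iff₀ hc₁0]
    linarith
  have hδt : δ₁ ≤ 3 * t / 2 := by
    have hδL : δ₁ * log q ≤ t := by
      rw [le_div_iff₀ hc₁0]
      nlinarith [mul_le_mul_of_nonneg_left hc₁1.le (by positivity : 0 ≤ δ₁ * log q)]
    nlinarith [log_two_gt_d9]
  have hxt : x ^ (-δ₁) ≤ exp (-(4 * t)) :=
    calc x ^ (-δ₁) ≤ (q ^ ν) ^ (-δ₁) :=
          rpow_le_rpow_of_nonpos (rpow_pos_of_pos hq₀ _) hx (by linarith)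
      _ = q ^ (-(ν * δ₁)) := by rw [← rpow_mul hq₀.le, mul_neg]
      _ ≤ q ^ (-(4 / c₁ * δ₁)) :=
        rpow_le_rpow_of_exponent_le (by linarith) (neg_le_neg (by gcongr))
      _ = exp (-(4 * t)) := by rw [rpow_def_of_pos hq₀, ht_def]; ring_nf
  have hbound := (hxt.trans (exp_neg_four_mul_le_of_le_half ht₀ ht)).trans
    (one_sub_sub_sq_le_one_sub_mul_one_add_sub hδ₁0.le hδt)
  have hrhs : 4 * δ₁ / (3 * c₁) * log q = 4 * t / 3 := by rw [ht_def]; ring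
  rw [sub_sub_cancel_left, hrhs, ge_iff_le, le_sub_comm, div_le_iff₀ (by linarith)]
  linarith
end

section
/- Let K be a number field of degree d and let α₁, α₂ ∈ K be such that K = Q(α₁, α₂). Then there exist integers m₁, m₂ with 0 ≤ m₁, m₂ < d such that K = Q(m₁α₁ + m₂α₂). -/
/-!
Take `m₁ = 1` and look at `γ_c = α₁ + c α₂` for `c = 0, …, d - 1`. If `γ_c` is not primitive,
some embedding `σ_c ≠ τ` of `K` into an algebraically closed field agrees with a fixed `τ` on
`γ_c`. A single `σ ≠ τ` can do so for at most one `c`, since agreeing on `γ_c` and `γ_{c'}`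
forces agreement on `α₁` and `α₂`, hence on `K`. There are only `d - 1` embeddings other
than `τ`, so some `γ_c` is primitive.
-/

open IntermediateField Module

section

variable {F E A : Type*} [Field F] [Field E] [Field A] [Algebra F E] [Algebra F A]

theorem IntermediateField.algHom_ext_of_adjoin_eq_top {s : Set E} (hs : adjoin F s = ⊤)
    ⦃φ ψ : E →ₐ[F] A⦄ (h : Set.EqOn φ ψ s) : φ = ψ := by
  have hres : φ.comp (adjoin F s).val = ψ.comp (adjoin F s).val :=
    adjoin_algHom_ext F fun x hx ↦ h hx
  ext x
  have hx : x ∈ adjoin F s := hs ▸ mem_top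
  exact congr($hres ⟨x, hx⟩)

theorem eq_of_algHom_apply_add_smul_eq {σ τ : E →ₐ[F] A} (hστ : σ ≠ τ) {α β : E}
    (hgen : adjoin F {α, β} = ⊤) {c c' : F}
    (hc : σ (α + c • β) = τ (α + c • β)) (hc' : σ (α + c' • β) = τ (α + c' • β)) :
    c = c' := by
  simp only [map_add, map_smul] at hc hc'
  simp only [Algebra.smul_def] at hc hc'
  by_contra hne
  have hcc' : algebraMap F A c - algebraMap F A c' ≠ 0 :=
    sub_ne_zero.mpr ((algebraMap F A).injective.ne hne)
  have hβ : σ β = τ β := by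
    have key : (algebraMap F A c - algebraMap F A c') * (σ β - τ β) = 0 := by
      linear_combination hc - hc'
    exact sub_eq_zero.mp ((mul_eq_zero.mp key).resolve_left hcc')
  have hα : σ α = τ α := by
    linear_combination hc - algebraMap F A c * hβ
  refine hστ (algHom_ext_of_adjoin_eq_top hgen ?_)
  rintro x (rfl | rfl)
  exacts [hα, hβ]

end

section

variable {F E : Type*} [Field F] [Field E] [Algebra F E] [FiniteDimensional F E]
  [Algebra.IsSeparable F E]

theorem exists_adjoin_add_smul_eq_top {α β : E} (hgen : adjoin F {α, β} = ⊤) (S : Finset F)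
    (hS : finrank F E ≤ S.card) : ∃ c ∈ S, F⟮α + c • β⟯ = ⊤ := by
  classical
  let A := AlgebraicClosure F
  have hA : ∀ x : E, ((minpoly F x).map (algebraMap F A)).Splits :=
    fun _ ↦ IsAlgClosed.splits _
  have hcard : Fintype.card (E →ₐ[F] A) = finrank F E := AlgHom.card F E A
  -- kept as an instance so that `choose!` below can drop the membership proofs
  have : Nonempty (E →ₐ[F] A) := Fintype.card_pos_iff.mp (hcard ▸ finrank_pos)
  obtain ⟨τ⟩ := ‹Nonempty (E →ₐ[F] A)›
  by_contra! hbad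
  have hwitness : ∀ c ∈ S, ∃ σ : E →ₐ[F] A, τ (α + c • β) = σ (α + c • β) ∧ τ ≠ σ := by
    intro c hc
    by_contra! h
    exact hbad c hc ((Field.primitive_element_iff_algHom_eq_of_eval F A hA _ τ).mpr h)
  choose! σ hσ hστ using hwitness
  have hlt : (Finset.univ.erase τ).card < S.card := by
    rw [Finset.card_erase_of_mem (Finset.mem_univ τ), Finset.card_univ, hcard]
    exact lt_of_lt_of_le (Nat.sub_lt finrank_pos one_pos) hS
  obtain ⟨c, hc, c', hc', hne, heq⟩ := Finset.exists_ne_map_eq_of_card_lt_of_maps_to hlt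
    fun c hc ↦ Finset.mem_erase.mpr ⟨(hστ c hc).symm, Finset.mem_univ _⟩
  refine hne (eq_of_algHom_apply_add_smul_eq (hστ c hc).symm hgen (hσ c hc).symm ?_)
  rw [heq]
  exact (hσ c' hc').symm

theorem exists_lt_finrank_adjoin_add_natCast_mul_eq_top [CharZero F] {α β : E}
    (hgen : adjoin F {α, β} = ⊤) : ∃ m < finrank F E, F⟮α + (m : E) * β⟯ = ⊤ := by
  let S := (Finset.range (finrank F E)).map (Nat.castEmbedding : ℕ ↪ F)
  have hS : finrank F E ≤ S.card := by
    rw [Finset.card_map, Finset.card_range]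
  obtain ⟨c, hc, hprim⟩ := exists_adjoin_add_smul_eq_top hgen S hS
  obtain ⟨m, hm, rfl⟩ := Finset.mem_map.mp hc
  refine ⟨m, Finset.mem_range.mp hm, ?_⟩
  rwa [Nat.castEmbedding_apply, Nat.cast_smul_eq_nsmul, nsmul_eq_mul] at hprim

end

/-- Primitive element with small integer coefficients: if `K` is a number field of degree `d`
and `K = ℚ(α₁, α₂)`, then there are integers `0 ≤ m₁, m₂ < d` with `K = ℚ(m₁α₁ + m₂α₂)`. -/
theorem small_primitive_element (K : Type*) [Field K] [NumberField K] (d : ℕ)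
    (hd : Module.finrank ℚ K = d) (α₁ α₂ : K)
    (hgen : IntermediateField.adjoin ℚ ({α₁, α₂} : Set K) = ⊤) :
    ∃ m₁ m₂ : ℕ, m₁ < d ∧ m₂ < d ∧
      IntermediateField.adjoin ℚ ({(m₁ : K) * α₁ + (m₂ : K) * α₂} : Set K) = ⊤ := by
  subst hd
  rcases Nat.lt_or_ge 1 (finrank ℚ K) with hd | hd
  · obtain ⟨m, hm, hprim⟩ := exists_lt_finrank_adjoin_add_natCast_mul_eq_top hgen
    exact ⟨1, m, hd, hm, by rwa [Nat.cast_one, one_mul]⟩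
  · have hbot : (⊥ : IntermediateField ℚ K) = ⊤ :=
      bot_eq_top_iff_finrank_eq_one.mpr (le_antisymm hd finrank_pos)
    exact ⟨0, 0, finrank_pos, finrank_pos, top_le_iff.mp (hbot ▸ bot_le)⟩
end

section
/- Let n > 1 and let p < q be primes, M = Q((p/q)^(1/n)). Then (pq)^(n−1) divides the discriminant Δ_M of M. Consequently H((p/q)^(1/n)) = q^(1/n) ≤ 2^(1/(2n)) · |Δ_M|^(1/(2n(n−1))). -/
open Polynomial

/-- The Mahler measure of a complex polynomial. -/
noncomputable def mahlerMeasure (p : Polynomial ℂ) : ℝ :=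
  ‖p.leadingCoeff‖ * (p.roots.map (fun z => max 1 ‖z‖)).prod

/-- A primitive integer polynomial proportional to the minimal polynomial of `α` over `ℚ`. -/
noncomputable def intMinpoly (α : ℂ) : Polynomial ℤ :=
  (IsLocalization.integerNormalization (nonZeroDivisors ℤ) (minpoly ℚ α)).primPart

/-- The absolute multiplicative Weil height of an algebraic number `α`, i.e.
`H(α) = M(f)^(1/deg α)` where `f` is the primitive integer minimal polynomial of `α` and
`M` is the Mahler measure; this agrees with
`∏_{v ∈ M_K} max{1,|α|_v}^{d_v/[K:ℚ]}` for any number field `K ∋ α`. -/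
noncomputable def weilHeight (α : ℂ) : ℝ :=
  _root_.mahlerMeasure ((intMinpoly α).map (Int.castRingHom ℂ)) ^ (((minpoly ℚ α).natDegree : ℝ)⁻¹)

open IntermediateField

/-!
For `θ_p = q α` and `θ_q = q α^(n-1)` we have `θ_p^n = p q^(n-1)` and `θ_q^n = q p^(n-1)`.
These pure polynomials are Eisenstein at `p`, resp. `q`, so `θ_p` and `θ_q` generate `M`, and
`disc ℤ[θ] = ± n^n c^(n-1)` for `θ^n = c`. A generator that is Eisenstein at `r` makes the index
`[𝓞_M : ℤ[θ]]` prime to `r`: some `m` prime to `r` has `m 𝓞_M ⊆ ℤ[θ]`. Since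
`disc ℤ[θ] = [𝓞_M : ℤ[θ]]^2 Δ_M`, `r^(n-1)` divides `Δ_M` for `r = p, q`.

The primitive integral minimal polynomial of `α` is `q X^n - p`; its roots have modulus
`(p/q)^(1/n) < 1`, so its Mahler measure is `q` and `H(α) = q^(1/n)`. The bound follows from
`q^2 < 2pq` and `(pq)^(n-1) ≤ |Δ_M|`.
-/

open NumberField Module

namespace Polynomial

theorem isEisensteinAt_C_mul_X_pow_sub_C_mul {R : Type*} [CommRing R] [IsDomain R] {n : ℕ}
    (hn : n ≠ 0) {r a s : R} (hr : Prime r) (hra : ¬ r ∣ a) (hrs : ¬ r ∣ s) :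
    (C a * X ^ n - C (r * s)).IsEisensteinAt (Ideal.span {r}) := by
  have hdeg : (C a * X ^ n - C (r * s)).natDegree = n := by
    rw [natDegree_sub_C, natDegree_C_mul_X_pow n a (fun h => hra (h ▸ dvd_zero r))]
  have hcoeff (i : ℕ) : (C a * X ^ n - C (r * s)).coeff i =
      (if i = n then a else 0) - if i = 0 then r * s else 0 := by
    simp only [coeff_sub, coeff_C_mul, coeff_X_pow, coeff_C, mul_ite, mul_one, mul_zero]
  refine ⟨?_, fun {i} hi => ?_, ?_⟩
  · rwa [leadingCoeff, hdeg, hcoeff, if_pos rfl, if_neg hn, sub_zero, Ideal.mem_span_singleton]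
  · rw [hdeg] at hi
    rw [hcoeff, if_neg hi.ne, zero_sub, Ideal.neg_mem_iff]
    split_ifs
    · exact Ideal.mem_span_singleton.2 (dvd_mul_right r s)
    · exact zero_mem _
  · rw [hcoeff, if_neg (Ne.symm hn), if_pos rfl, zero_sub, Ideal.neg_mem_iff,
      Ideal.span_singleton_pow, Ideal.mem_span_singleton, pow_two, mul_dvd_mul_iff_left hr.ne_zero]
    exact hrs

theorem isPrimitive_C_mul_X_pow_sub_C {R : Type*} [CommRing R] {n : ℕ} (hn : n ≠ 0) {a b : R}
    (hab : IsCoprime a b) : (C a * X ^ n - C b).IsPrimitive := by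
  intro r hr
  have hcoeff := (C_dvd_iff_dvd_coeff r _).1 hr
  have hra : r ∣ a := by simpa [coeff_C, hn] using hcoeff n
  have hrb : r ∣ b := by simpa [Ne.symm hn] using hcoeff 0
  exact hab.isUnit_of_dvd' hra hrb

theorem irreducible_X_pow_sub_C_div {n : ℕ} (hn : n ≠ 0) {p q : ℤ} (hp : Prime p)
    (hpq : ¬ p ∣ q) : Irreducible (X ^ n - C ((p : ℚ) / q)) := by
  have hq : q ≠ 0 := fun h => hpq (h ▸ dvd_zero p)
  have hqℚ : (q : ℚ) ≠ 0 := Int.cast_ne_zero.2 hq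
  have hei := isEisensteinAt_C_mul_X_pow_sub_C_mul hn hp hpq hp.not_dvd_one
  rw [mul_one] at hei
  have hprim := isPrimitive_C_mul_X_pow_sub_C hn ((hp.coprime_iff_not_dvd.2 hpq).symm)
  have hirr := (IsPrimitive.Int.irreducible_iff_irreducible_map_cast hprim).1 <|
    hei.irreducible ((Ideal.span_singleton_prime hp.ne_zero).2 hp) hprim
      (by rw [natDegree_sub_C, natDegree_C_mul_X_pow n _ hq]; exact Nat.pos_of_ne_zero hn)
  have hmap : (C q * X ^ n - C p).map (Int.castRingHom ℚ) =
      C (q : ℚ) * (X ^ n - C ((p : ℚ) / q)) := by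
    rw [mul_sub, ← C_mul, mul_div_cancel₀ _ hqℚ]
    simp
  rw [hmap] at hirr
  exact (associated_unit_mul_left _ _ (isUnit_C.2 hqℚ.isUnit)).irreducible hirr

theorem IsPrimitive.associated_of_associated_map {R K : Type*} [CommRing R] [IsDomain R]
    [IsGCDMonoid R] [Field K] [Algebra R K] [IsFractionRing R K] {f g : R[X]}
    (hf : f.IsPrimitive) (hg : g.IsPrimitive)
    (h : Associated (f.map (algebraMap R K)) (g.map (algebraMap R K))) : Associated f g :=
  associated_of_dvd_dvd (hf.dvd_of_fraction_map_dvd_fraction_map h.dvd)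
    (hg.dvd_of_fraction_map_dvd_fraction_map h.symm.dvd)

theorem mahlerMeasure_X_pow_sub_C_of_norm_le_one {n : ℕ} (hn : n ≠ 0) {z : ℂ} (hz : ‖z‖ ≤ 1) :
    (X ^ n - C z).mahlerMeasure = 1 := by
  rw [mahlerMeasure_eq_leadingCoeff_mul_prod_roots, (monic_X_pow_sub_C z hn).leadingCoeff,
    norm_one, one_mul]
  refine Multiset.prod_eq_one fun _ hx => ?_
  obtain ⟨w, hw, rfl⟩ := Multiset.mem_map.1 hx
  have hwn : w ^ n = z := by
    simpa [sub_eq_zero] using isRoot_of_mem_roots hw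
  refine max_eq_left ((pow_le_one_iff_of_nonneg (norm_nonneg w) hn).1 ?_)
  rwa [← norm_pow, hwn]

theorem mahlerMeasure_map_intCast_eq_of_associated {f g : ℤ[X]} (h : Associated f g) :
    (f.map (Int.castRingHom ℂ)).mahlerMeasure = (g.map (Int.castRingHom ℂ)).mahlerMeasure := by
  obtain ⟨u, rfl⟩ := h
  obtain ⟨r, hr, hu⟩ := Polynomial.isUnit_iff.1 u.isUnit
  rw [← hu, Polynomial.map_mul, mahlerMeasure_mul, map_C, mahlerMeasure_const, eq_intCast,
    Complex.norm_intCast, ← Int.cast_abs, Int.isUnit_iff_abs_eq.1 hr, Int.cast_one, mul_one]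

end Polynomial

theorem Algebra.discr_powerBasis_of_minpoly_eq_X_pow_sub_C {K L : Type*} [Field K] [Field L]
    [Algebra K L] [Algebra.IsSeparable K L] (B : PowerBasis K L) {n : ℕ} {c : K}
    (hmin : minpoly K B.gen = X ^ n - C c) :
    Algebra.discr K B.basis = (-1) ^ (n * (n - 1) / 2) * (n ^ n * ((-1) ^ n * -c) ^ (n - 1)) := by
  have := B.finite
  have hdim : B.dim = n := by rw [← B.natDegree_minpoly, hmin, natDegree_X_pow_sub_C]
  have hn : n ≠ 0 := hdim ▸ B.dim_pos.ne'
  have hder : aeval B.gen (derivative (X ^ n - C c)) = algebraMap K L n * B.gen ^ (n - 1) := by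
    simp [derivative_X_pow]
  rw [Algebra.discr_powerBasis_eq_norm, B.finrank, hdim, hmin, hder, map_mul,
    Algebra.norm_algebraMap, map_pow, Algebra.PowerBasis.norm_gen_eq_coeff_zero_minpoly, hmin,
    B.finrank, hdim]
  simp [Ne.symm hn]

theorem Module.Basis.exists_toMatrix_eq_map_intCast {ι L : Type*} [CommRing L] [Algebra ℚ L]
    (b : Basis ι ℚ L) {w : ι → L} (hw : ∀ j, w j ∈ Submodule.span ℤ (Set.range b)) :
    ∃ P : Matrix ι ι ℤ, b.toMatrix w = P.map (Int.cast : ℤ → ℚ) := by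
  choose P hP using fun i j => (b.mem_span_iff_repr_mem ℤ _).1 (hw j) i
  exact ⟨Matrix.of P, by ext i j; simp [Basis.toMatrix_apply, ← hP]⟩

theorem Algebra.exists_discr_eq_sq_mul_discr_and_dvd {ι L : Type*} [Fintype ι] [DecidableEq ι]
    [CommRing L] [Algebra ℚ L] (b w : Basis ι ℚ L)
    (hw : ∀ j, w j ∈ Submodule.span ℤ (Set.range b)) {m : ℤ}
    (hb : ∀ j, m • b j ∈ Submodule.span ℤ (Set.range w)) :
    ∃ d : ℤ, Algebra.discr ℚ w = d ^ 2 * Algebra.discr ℚ b ∧ d ∣ m ^ Fintype.card ι := by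
  obtain ⟨P, hP⟩ := b.exists_toMatrix_eq_map_intCast hw
  obtain ⟨Q, hQ⟩ := w.exists_toMatrix_eq_map_intCast hb
  refine ⟨P.det, ?_, ⟨Q.det, ?_⟩⟩
  · rw [← b.toMatrix_map_vecMul w, Algebra.discr_of_matrix_vecMul, hP, ← Int.cast_det]
  · have hself : b.toMatrix (fun j => m • b j) = (m : ℚ) • 1 := by
      ext i j
      rw [Basis.toMatrix_apply, map_zsmul, Basis.repr_self, Finsupp.smul_apply,
        Finsupp.single_apply, Matrix.smul_apply, Matrix.one_apply]
      split_ifs <;> simp_all [eq_comm]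
    have hdet := congrArg Matrix.det (b.toMatrix_mul_toMatrix w fun j => m • b j)
    rw [hP, hQ, hself, Matrix.det_mul, ← Int.cast_det, ← Int.cast_det, Matrix.det_smul,
      Matrix.det_one, mul_one] at hdet
    exact_mod_cast hdet.symm

theorem PowerBasis.adjoin_gen_le_span_basis {R K L : Type*} [CommRing R] [IsDomain R]
    [IsIntegrallyClosed R] [Field K] [Algebra R K] [IsFractionRing R K] [Field L] [Algebra K L]
    [Algebra R L] [IsScalarTower R K L] (B : PowerBasis K L) (hB : IsIntegral R B.gen) :
    Subalgebra.toSubmodule (Algebra.adjoin R {B.gen}) ≤ Submodule.span R (Set.range B.basis) := by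
  rw [Algebra.adjoin_eq_span, Submodule.span_le, Submonoid.closure_singleton_eq]
  rintro _ ⟨k, rfl⟩
  refine (B.basis.mem_span_iff_repr_mem R _).2 fun i => ?_
  exact IsIntegrallyClosed.isIntegral_iff.1 <| B.repr_gen_pow_isIntegral hB
    (minpoly.isIntegrallyClosed_eq_field_fractions' K hB) k i

theorem PowerBasis.exists_not_dvd_smul_mem_adjoin_of_isEisensteinAt {R K L : Type*} [CommRing R]
    [IsDomain R] [IsIntegrallyClosed R] [WfDvdMonoid R] [Field K] [Algebra R K]
    [IsFractionRing R K] [Field L] [Algebra K L] [Algebra R L] [IsScalarTower R K L]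
    [Algebra.IsSeparable K L] (B : PowerBasis K L) (hB : IsIntegral R B.gen) {r : R}
    (hr : Prime r) (hei : (minpoly R B.gen).IsEisensteinAt (Submodule.span R {r})) :
    ∃ m : R, ¬ r ∣ m ∧ ∀ x : L, IsIntegral R x → m • x ∈ Algebra.adjoin R {B.gen} := by
  have := B.finite
  obtain ⟨D, hD⟩ := IsIntegrallyClosed.isIntegral_iff.1 <|
    Algebra.discr_isIntegral K fun i => B.basis_eq_pow i ▸ hB.pow _
  have hD0 : D ≠ 0 := by
    rintro rfl
    exact Algebra.discr_not_zero_of_basis K B.basis (by rw [← hD, map_zero])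
  obtain ⟨k, m, hm, rfl⟩ := WfDvdMonoid.max_power_factor hD0 hr.irreducible
  refine ⟨m, hm, fun x hx => ?_⟩
  have hmem := Algebra.discr_mul_isIntegral_mem_adjoin K hB hx
  rw [← hD, algebraMap_smul, mul_smul] at hmem
  exact mem_adjoin_of_smul_prime_pow_smul_of_minpoly_isEisensteinAt hr hB (hx.smul m) hmem hei

theorem NumberField.pow_dvd_discr_of_isEisensteinAt {K : Type*} [Field K] [NumberField K]
    (B : PowerBasis ℚ K) (hB : IsIntegral ℤ B.gen) {r : ℤ} (hr : Prime r)
    (hei : (minpoly ℤ B.gen).IsEisensteinAt (Submodule.span ℤ {r})) {G : ℤ}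
    (hG : Algebra.discr ℚ B.basis = G) {k : ℕ} (hdvd : r ^ k ∣ G) : r ^ k ∣ discr K := by
  obtain ⟨m, hm, hmem⟩ := B.exists_not_dvd_smul_mem_adjoin_of_isEisensteinAt hB hr hei
  set b := (integralBasis K).reindex ((integralBasis K).indexEquiv B.basis)
  have hb : ∀ j, IsIntegral ℤ (b j) := fun j => by
    simpa [b] using RingOfIntegers.isIntegral_coe _
  have hspan : Submodule.span ℤ (Set.range b) = Submodule.span ℤ (Set.range (integralBasis K)) := by
    rw [Basis.range_reindex]
  obtain ⟨d, hGd, hdm⟩ := Algebra.exists_discr_eq_sq_mul_discr_and_dvd b B.basis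
    (fun j => hspan ▸ (mem_span_integralBasis K).2 ⟨⟨_, B.basis_eq_pow j ▸ hB.pow _⟩, rfl⟩)
    (fun j => B.adjoin_gen_le_span_basis hB (hmem _ (hb j)))
  rw [hG, Basis.coe_reindex, Algebra.discr_reindex, ← coe_discr] at hGd
  have hGd' : G = d ^ 2 * discr K := by exact_mod_cast hGd
  have hrd : ¬ r ∣ d := fun h => hm (hr.dvd_of_dvd_pow (h.trans hdm))
  exact (((hr.coprime_iff_not_dvd).2 hrd).pow).dvd_of_dvd_mul_left (hGd' ▸ hdvd)

theorem minpoly_eq_X_pow_sub_C_of_isEisensteinAt {K : Type*} [Field K] [Algebra ℚ K] {n : ℕ}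
    (hn : n ≠ 0) {r c : ℤ} (hr : Prime r) (hei : (X ^ n - C c).IsEisensteinAt (Ideal.span {r}))
    {θ : K} (hθ : θ ^ n = c) :
    minpoly ℚ θ = X ^ n - C (c : ℚ) ∧ minpoly ℤ θ = X ^ n - C c := by
  have hf : (X ^ n - C c).Monic := monic_X_pow_sub_C c hn
  have hθℤ : IsIntegral ℤ θ := ⟨_, hf, by rw [← aeval_def]; simp [hθ]⟩
  have hirr : Irreducible (X ^ n - C (c : ℚ)) := by
    have := (IsPrimitive.Int.irreducible_iff_irreducible_map_cast hf.isPrimitive).1 <|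
      hei.irreducible ((Ideal.span_singleton_prime hr.ne_zero).2 hr) hf.isPrimitive
        (by rw [natDegree_X_pow_sub_C]; exact Nat.pos_of_ne_zero hn)
    simpa using this
  have hminℚ : minpoly ℚ θ = X ^ n - C (c : ℚ) :=
    (minpoly.eq_of_irreducible_of_monic hirr (by simp [hθ]) (monic_X_pow_sub_C _ hn)).symm
  refine ⟨hminℚ, map_injective (algebraMap ℤ ℚ) (algebraMap ℤ ℚ).injective_int ?_⟩
  rw [← minpoly.isIntegrallyClosed_eq_field_fractions' ℚ hθℤ, hminℚ]
  simp

theorem NumberField.pow_sub_one_dvd_discr_of_pow_eq_mul {K : Type*} [Field K] [NumberField K]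
    {θ : K} {r s : ℤ} (hr : Prime r) (hrs : ¬ r ∣ s)
    (hθ : θ ^ finrank ℚ K = ((r * s : ℤ) : K)) : r ^ (finrank ℚ K - 1) ∣ discr K := by
  set n := finrank ℚ K
  have hn : n ≠ 0 := finrank_pos.ne'
  have hei : (X ^ n - C (r * s)).IsEisensteinAt (Ideal.span {r}) := by
    simpa only [map_one, one_mul] using
      isEisensteinAt_C_mul_X_pow_sub_C_mul hn hr hr.not_dvd_one hrs
  generalize hc : r * s = c at hθ hei
  obtain ⟨hminℚ, hminℤ⟩ := minpoly_eq_X_pow_sub_C_of_isEisensteinAt hn hr hei hθ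
  have hθℚ : IsIntegral ℚ θ := .of_finite ℚ θ
  have htop : Algebra.adjoin ℚ {θ} = ⊤ := Algebra.adjoin_eq_top_of_primitive_element
    hθℚ.isAlgebraic <| (Field.primitive_element_iff_minpoly_natDegree_eq ℚ θ).2 <| by
      rw [hminℚ, natDegree_X_pow_sub_C]
  let B := PowerBasis.ofAdjoinEqTop hθℚ htop
  have hθℤ : IsIntegral ℤ θ := minpoly.ne_zero_iff.1 (hminℤ ▸ (monic_X_pow_sub_C c hn).ne_zero)
  refine pow_dvd_discr_of_isEisensteinAt B hθℤ hr (hminℤ ▸ hei)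
    (G := (-1) ^ (n * (n - 1) / 2) * (n ^ n * ((-1) ^ n * -c) ^ (n - 1))) ?_ ?_
  · rw [Algebra.discr_powerBasis_of_minpoly_eq_X_pow_sub_C B hminℚ]
    push_cast
    rfl
  · have hcG : c ^ (n - 1) ∣ (-1) ^ (n * (n - 1) / 2) * (n ^ n * ((-1) ^ n * -c) ^ (n - 1)) :=
      ((pow_dvd_pow_of_dvd ((dvd_neg.2 dvd_rfl).mul_left _) _).mul_left _).mul_left _
    exact (pow_dvd_pow_of_dvd (hc ▸ dvd_mul_right r s) _).trans hcG

theorem mul_pow_eq_of_pow_eq_div {F : Type*} [Field F] {n : ℕ} (hn : n ≠ 0) {a x y : F}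
    (hy : y ≠ 0) (ha : a ^ n = x / y) :
    (y * a) ^ n = x * y ^ (n - 1) ∧ (y * a ^ (n - 1)) ^ n = y * x ^ (n - 1) := by
  obtain ⟨m, rfl⟩ := Nat.exists_eq_add_one_of_ne_zero hn
  rw [Nat.add_sub_cancel, mul_pow, mul_pow, ← pow_mul, mul_comm m, pow_mul, ha, div_pow]
  constructor <;> field_simp <;> ring

theorem NumberField.mul_pow_sub_one_dvd_discr_of_pow_eq_div {K : Type*} [Field K]
    [NumberField K] {a : K} {p q : ℤ} (hp : Prime p) (hq : Prime q) (hpq : IsCoprime p q)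
    (ha : a ^ finrank ℚ K = p / q) : (p * q) ^ (finrank ℚ K - 1) ∣ discr K := by
  have hn : finrank ℚ K ≠ 0 := finrank_pos.ne'
  obtain ⟨hθp, hθq⟩ := mul_pow_eq_of_pow_eq_div hn (Int.cast_ne_zero.2 hq.ne_zero) ha
  have hpdvd := pow_sub_one_dvd_discr_of_pow_eq_mul hp
    (hp.coprime_iff_not_dvd.1 hpq ∘ hp.dvd_of_dvd_pow) (s := q ^ (finrank ℚ K - 1))
    (by rw [hθp]; push_cast; rfl)
  have hqdvd := pow_sub_one_dvd_discr_of_pow_eq_mul hq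
    (hq.coprime_iff_not_dvd.1 hpq.symm ∘ hq.dvd_of_dvd_pow) (s := p ^ (finrank ℚ K - 1))
    (by rw [hθq]; push_cast; rfl)
  exact mul_pow p q _ ▸ hpq.pow.mul_dvd hpdvd hqdvd

theorem mahlerMeasure_eq_polynomial_mahlerMeasure (f : ℂ[X]) :
    _root_.mahlerMeasure f = f.mahlerMeasure :=
  (f.mahlerMeasure_eq_leadingCoeff_mul_prod_roots).symm

theorem associated_map_intMinpoly {α : ℂ} (hα : IsIntegral ℚ α) :
    Associated ((intMinpoly α).map (algebraMap ℤ ℚ)) (minpoly ℚ α) := by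
  obtain ⟨b, hb0, hb⟩ :=
    IsLocalization.integerNormalization_spec (nonZeroDivisors ℤ) (minpoly ℚ α)
  set N := IsLocalization.integerNormalization (nonZeroDivisors ℤ) (minpoly ℚ α)
  have hN : N ≠ 0 := by
    rw [Ne, IsFractionRing.integerNormalization_eq_zero_iff]
    exact minpoly.ne_zero hα
  rw [eq_C_content_mul_primPart N, Polynomial.map_mul, map_C, zsmul_eq_mul, ← C_eq_intCast] at hb
  have hcontent : IsUnit (C (algebraMap ℤ ℚ N.content)) :=
    isUnit_C.2 <| isUnit_iff_ne_zero.2 <| by simpa using content_eq_zero_iff.not.2 hN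
  have hbunit : IsUnit (C (b : ℚ)) :=
    isUnit_C.2 <| isUnit_iff_ne_zero.2 <| Int.cast_ne_zero.2 <| nonZeroDivisors.ne_zero hb0
  exact (associated_unit_mul_right _ _ hcontent).trans (hb ▸ associated_unit_mul_left _ _ hbunit)

theorem weilHeight_eq_of_minpoly_eq_X_pow_sub_C {z : ℂ} {n : ℕ} (hn : n ≠ 0) {p q : ℤ}
    (hpq : IsCoprime p q) (hle : |p| ≤ |q|) (hz : minpoly ℚ z = X ^ n - C ((p : ℚ) / q)) :
    weilHeight z = |(q : ℝ)| ^ ((1 : ℝ) / n) := by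
  have hq : q ≠ 0 := by
    rintro rfl
    rw [abs_zero, abs_nonpos_iff] at hle
    exact not_isCoprime_zero_zero (hle ▸ hpq)
  have hzint : IsIntegral ℚ z := minpoly.ne_zero_iff.1 (hz ▸ (monic_X_pow_sub_C _ hn).ne_zero)
  set f : ℤ[X] := C q * X ^ n - C p
  have hf : f.map (algebraMap ℤ ℚ) = C (q : ℚ) * minpoly ℚ z := by
    rw [hz, mul_sub, ← C_mul, mul_div_cancel₀ _ (Int.cast_ne_zero.2 hq)]
    simp [f]
  have hassoc : Associated (intMinpoly z) f := by
    refine (isPrimitive_primPart _).associated_of_associated_map (K := ℚ)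
      (isPrimitive_C_mul_X_pow_sub_C hn hpq.symm) ?_
    rw [hf]
    exact (associated_map_intMinpoly hzint).trans <| associated_unit_mul_right _ _ <|
      isUnit_C.2 <| isUnit_iff_ne_zero.2 <| Int.cast_ne_zero.2 hq
  have hfC : f.map (Int.castRingHom ℂ) = C (q : ℂ) * (X ^ n - C ((p : ℂ) / q)) := by
    rw [mul_sub, ← C_mul, mul_div_cancel₀ _ (Int.cast_ne_zero.2 hq)]
    simp [f]
  have hroots : ‖(p : ℂ) / q‖ ≤ 1 := by
    rw [norm_div, Complex.norm_intCast, Complex.norm_intCast]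
    exact div_le_one_of_le₀ (by exact_mod_cast hle) (abs_nonneg _)
  rw [weilHeight, mahlerMeasure_eq_polynomial_mahlerMeasure,
    mahlerMeasure_map_intCast_eq_of_associated hassoc, hfC, mahlerMeasure_mul, mahlerMeasure_const,
    mahlerMeasure_X_pow_sub_C_of_norm_le_one hn hroots, hz, natDegree_X_pow_sub_C,
    Complex.norm_intCast, mul_one, one_div]

theorem Real.rpow_one_div_le_of_mul_pow_le {n : ℕ} (hn : 1 < n) {p q D : ℝ} (hq : 0 < q)
    (hqp : q < 2 * p) (hD : (p * q) ^ (n - 1) ≤ D) :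
    q ^ ((1 : ℝ) / n) ≤ 2 ^ ((1 : ℝ) / (2 * n)) * D ^ ((1 : ℝ) / (2 * n * (n - 1))) := by
  have hp : 0 < p := by linarith
  have hn' : (1 : ℝ) < n := by exact_mod_cast hn
  have hn1 : ((n - 1 : ℕ) : ℝ) = n - 1 := by push_cast [Nat.cast_sub hn.le]; ring
  calc q ^ ((1 : ℝ) / n) = (q ^ 2) ^ ((1 : ℝ) / (2 * n)) := by
        rw [← Real.rpow_natCast, ← Real.rpow_mul hq.le]
        congr 1
        field_simp
        norm_num
    _ ≤ (2 * (p * q)) ^ ((1 : ℝ) / (2 * n)) := by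
        gcongr
        nlinarith
    _ = 2 ^ ((1 : ℝ) / (2 * n)) * ((p * q) ^ (n - 1)) ^ ((1 : ℝ) / (2 * n * (n - 1))) := by
        rw [Real.mul_rpow (by norm_num) (by positivity), ← Real.rpow_natCast,
          ← Real.rpow_mul (by positivity), hn1]
        congr 2
        field_simp [show (n : ℝ) - 1 ≠ 0 by linarith]
    _ ≤ 2 ^ ((1 : ℝ) / (2 * n)) * D ^ ((1 : ℝ) / (2 * n * (n - 1))) := by
        gcongr

theorem discr_div_and_height_bound_general (n : ℕ) (hn : 1 < n) (p q : ℕ)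
    (hp : p.Prime) (hq : q.Prime) (hpq : p < q) (hq2p : q < 2 * p)
    (α : ℝ) (hα : α ^ n = (p : ℝ) / q)
    [NumberField ℚ⟮(α : ℂ)⟯] :
    ((p : ℤ) * q) ^ (n - 1) ∣ NumberField.discr ℚ⟮(α : ℂ)⟯ ∧
      weilHeight (α : ℂ) = (q : ℝ) ^ ((1 : ℝ) / n) ∧
      (q : ℝ) ^ ((1 : ℝ) / n)
        ≤ 2 ^ ((1 : ℝ) / (2 * n)) *
            (|(NumberField.discr ℚ⟮(α : ℂ)⟯ : ℝ)|) ^ ((1 : ℝ) / (2 * n * (n - 1))) := by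
  have hn0 : n ≠ 0 := by omega
  have hp' : Prime (p : ℤ) := Nat.prime_iff_prime_int.1 hp
  have hcop : IsCoprime (p : ℤ) q :=
    Nat.isCoprime_iff_coprime.2 ((Nat.coprime_primes hp hq).2 hpq.ne)
  have hαC : (α : ℂ) ^ n = ((p : ℚ) / q : ℚ) := by rw [← Complex.ofReal_pow, hα]; push_cast; rfl
  have hmin : minpoly ℚ (α : ℂ) = X ^ n - C (((p : ℤ) : ℚ) / (q : ℤ)) :=
    (minpoly.eq_of_irreducible_of_monic (irreducible_X_pow_sub_C_div hn0 hp'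
      (hp'.coprime_iff_not_dvd.1 hcop)) (by simp [hαC]) (monic_X_pow_sub_C _ hn0)).symm
  have hrank : Module.finrank ℚ ℚ⟮(α : ℂ)⟯ = n := by
    have hint : IsIntegral ℚ (α : ℂ) := isIntegral_iff.1 (.of_finite ℚ (AdjoinSimple.gen ℚ _))
    rw [adjoin.finrank hint, hmin, natDegree_X_pow_sub_C]
  have hgen : AdjoinSimple.gen ℚ (α : ℂ) ^ Module.finrank ℚ ℚ⟮(α : ℂ)⟯ =
      ((p : ℤ) : ℚ⟮(α : ℂ)⟯) / (q : ℤ) := by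
    ext
    simpa [hrank] using hαC
  have hdvd := mul_pow_sub_one_dvd_discr_of_pow_eq_div hp' (Nat.prime_iff_prime_int.1 hq) hcop hgen
  rw [hrank] at hdvd
  refine ⟨hdvd, ?_, ?_⟩
  · simpa using weilHeight_eq_of_minpoly_eq_X_pow_sub_C hn0 hcop (by simpa using hpq.le) hmin
  · refine Real.rpow_one_div_le_of_mul_pow_le hn (p := p) (by exact_mod_cast hq.pos)
      (by exact_mod_cast hq2p) ?_
    exact_mod_cast Int.le_of_dvd (abs_pos.2 (discr_ne_zero _)) ((dvd_abs _ _).2 hdvd)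

/-- For `n > 1`, primes `p < q`, and `M = ℚ((p/q)^(1/n))`: `(pq)^(n−1)` divides the
discriminant `Δ_M`, and (assuming additionally `q < 2p`)
`H((p/q)^(1/n)) = q^(1/n) ≤ 2^(1/(2n)) · |Δ_M|^(1/(2n(n−1)))`. -/
theorem discr_div_and_height_bound (n : ℕ) (hn : 1 < n) (p q : ℕ)
    (hp : p.Prime) (hq : q.Prime) (hpq : p < q) (hq2p : q < 2 * p)
    (α : ℝ) (hαpos : 0 < α) (hα : α ^ n = (p : ℝ) / q)
    [NumberField ℚ⟮(α : ℂ)⟯] :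
    ((p : ℤ) * q) ^ (n - 1) ∣ NumberField.discr ℚ⟮(α : ℂ)⟯ ∧
      weilHeight (α : ℂ) = (q : ℝ) ^ ((1 : ℝ) / n) ∧
      (q : ℝ) ^ ((1 : ℝ) / n)
        ≤ 2 ^ ((1 : ℝ) / (2 * n)) *
            (|(NumberField.discr ℚ⟮(α : ℂ)⟯ : ℝ)|) ^ ((1 : ℝ) / (2 * n * (n - 1))) :=
  discr_div_and_height_bound_general n hn p q hp hq hpq hq2p α hα
end
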